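/- (Counterfactual fairness of the removal-pooling output.) Let V be a finite type, G₁, …, Gₙ directed graphs on V given by edge relations E_j : V → V → Prop, A ⊆ V a set of protected attributes, and Ŷ : V a predictor with Ŷ ∉ S, where S = A ∪ ⋃_{j=1}^{n} {v | ∃ a ∈ A, Relation.TransGen E_j a v}. Suppose G* is any directed graph on V each of whose edges lies in the union of the pruned expert edge sets, i.e., whenever E* u v then u ∉ S, v ∉ S, and E_j u v for some j (as is the case for the output of the removal-pooling algorithm, whose pooling step only inserts edges of the pruned expert graphs). Then no element of A is an ancestor-or-equal of Ŷ in G* (for every X ∈ A, ¬ Relation.ReflTransGen E* X Ŷ). Consequently, for any structural causal model whose parent relation is E* (with E* well-founded), any structural functions f, any context u, and any two assignments a, a' : A → D, the value of Ŷ is the same under the interventions do(A = a) and do(A = a'): val f[A←a] u Ŷ = val f[A←a'] u Ŷ; that is, the predictor of the pooled model is counterfactually fair. -/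

import Mathlib

/-! Every pooled edge starts outside `S ⊇ A`, so a protected attribute has no outgoing edge
in `E*` and, not being `Ŷ`, cannot be an ancestor-or-equal of `Ŷ`. The value of a variable
depends only on the structural functions of its ancestors-or-equal, and `do(A = a)` changes
structural functions only on `A`; hence `Ŷ` takes its unintervened value under every
intervention on `A`. -/

/-- The valuation of a structural causal model: each variable's value is computed
from its exogenous input and the (recursively computed) values of its parents,
by well-founded recursion on the parent relation `R`. -/
def val {V Ex D : Type*} (R : V → V → Prop) (hR : WellFounded R)
    (f : ∀ v : V, Ex → (∀ w : V, R w v → D) → D) (u : V → Ex) : V → D :=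
  hR.fix fun v ih => f v (u v) fun w hw => ih w hw

open Classical in
/-- The intervention `do(A = a)`: the structural function of each `X ∈ A` is replaced
by the constant function returning `a X`; all other structural functions are unchanged. -/
noncomputable def interveneSet {V Ex D : Type*} (R : V → V → Prop)
    (f : ∀ v : V, Ex → (∀ w : V, R w v → D) → D) (A : Set V) (a : A → D) :
    ∀ v : V, Ex → (∀ w : V, R w v → D) → D :=
  fun v => if h : v ∈ A then fun _ _ => a ⟨v, h⟩ else f v

theorem Relation.ReflTransGen.eq_of_forall_not_rel {α : Type*} {r : α → α → Prop} {x y : α}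
    (h : ReflTransGen r x y) (hx : ∀ z, ¬ r x z) : x = y := by
  rcases h.cases_head with hxy | ⟨z, hxz, -⟩
  · exact hxy
  · exact absurd hxz (hx z)

section StructuralCausalModel

variable {V Ex D : Type*} {R : V → V → Prop} (hR : WellFounded R)

theorem val_eq (f : ∀ v : V, Ex → (∀ w : V, R w v → D) → D) (u : V → Ex) (v : V) :
    val R hR f u v = f v (u v) fun w _ => val R hR f u w :=
  hR.fix_eq _ v

theorem val_congr_of_forall_ancestor {f g : ∀ v : V, Ex → (∀ w : V, R w v → D) → D}
    (u : V → Ex) {v : V} (hfg : ∀ w, Relation.ReflTransGen R w v → f w = g w) :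
    val R hR f u v = val R hR g u v := by
  induction v using hR.induction with
  | _ v ih =>
    rw [val_eq, val_eq, hfg v .refl]
    congr 1
    funext w hw
    exact ih w hw fun x hx => hfg x (hx.tail hw)

theorem interveneSet_of_notMem (f : ∀ v : V, Ex → (∀ w : V, R w v → D) → D) {A : Set V}
    (a : A → D) {v : V} (hv : v ∉ A) : interveneSet R f A a v = f v := by
  simp only [interveneSet, dif_neg hv]

theorem val_interveneSet_of_not_ancestor (f : ∀ v : V, Ex → (∀ w : V, R w v → D) → D)
    (u : V → Ex) {A : Set V} (a : A → D) {v : V}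
    (hv : ∀ X ∈ A, ¬ Relation.ReflTransGen R X v) :
    val R hR (interveneSet R f A a) u v = val R hR f u v :=
  val_congr_of_forall_ancestor hR u fun w hw =>
    interveneSet_of_notMem f a fun hwA => hv w hwA hw

end StructuralCausalModel

theorem removal_pooling_counterfactually_fair_general {V Ex D : Type*} (n : ℕ)
    (Ej : Fin n → V → V → Prop) (A : Set V) (Yhat : V) (S : Set V)
    (hS : S = A ∪ ⋃ j : Fin n, {v : V | ∃ a ∈ A, Relation.TransGen (Ej j) a v})
    (hY : Yhat ∉ S)
    (Estar : V → V → Prop)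
    (hE : ∀ u v : V, Estar u v → u ∉ S ∧ v ∉ S ∧ ∃ j : Fin n, Ej j u v) :
    (∀ X ∈ A, ¬ Relation.ReflTransGen Estar X Yhat) ∧
    ∀ (hR : WellFounded Estar)
      (f : ∀ v : V, Ex → (∀ w : V, Estar w v → D) → D)
      (u : V → Ex) (a a' : A → D),
      val Estar hR (interveneSet Estar f A a) u Yhat =
        val Estar hR (interveneSet Estar f A a') u Yhat := by
  have hAS : A ⊆ S := hS ▸ Set.subset_union_left
  have not_ancestor : ∀ X ∈ A, ¬ Relation.ReflTransGen Estar X Yhat := by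
    intro X hX hXY
    have hX_eq : X = Yhat := hXY.eq_of_forall_not_rel fun z hXz => (hE X z hXz).1 (hAS hX)
    exact hY (hX_eq ▸ hAS hX)
  refine ⟨not_ancestor, fun hR f u a a' => ?_⟩
  rw [val_interveneSet_of_not_ancestor hR f u a not_ancestor,
    val_interveneSet_of_not_ancestor hR f u a' not_ancestor]

/-- (Counterfactual fairness of the removal-pooling output.) If every edge of the
pooled graph `E*` avoids `S = A ∪ ⋃ⱼ (descendants of A in the j-th expert graph)` and
comes from some expert graph, and the predictor `Ŷ ∉ S`, then no protected attribute
is an ancestor-or-equal of `Ŷ` in `E*`; consequently, in any structural causal model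
with parent relation `E*`, the value of `Ŷ` is invariant under interventions
`do(A = a)` and `do(A = a')`: the pooled predictor is counterfactually fair. -/
theorem removal_pooling_counterfactually_fair {V Ex D : Type*} [Finite V] (n : ℕ)
    (Ej : Fin n → V → V → Prop) (A : Set V) (Yhat : V) (S : Set V)
    (hS : S = A ∪ ⋃ j : Fin n, {v : V | ∃ a ∈ A, Relation.TransGen (Ej j) a v})
    (hY : Yhat ∉ S)
    (Estar : V → V → Prop)
    (hE : ∀ u v : V, Estar u v → u ∉ S ∧ v ∉ S ∧ ∃ j : Fin n, Ej j u v) :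
    (∀ X ∈ A, ¬ Relation.ReflTransGen Estar X Yhat) ∧
    ∀ (hR : WellFounded Estar)
      (f : ∀ v : V, Ex → (∀ w : V, Estar w v → D) → D)
      (u : V → Ex) (a a' : A → D),
      val Estar hR (interveneSet Estar f A a) u Yhat =
        val Estar hR (interveneSet Estar f A a') u Yhat :=
  removal_pooling_counterfactually_fair_general n Ej A Yhat S hS hY Estar hE
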